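/- arXiv:math/0501009 — 4 statements merged into one kernel-verified Lean document; each statement's English description precedes it below -/
import Mathlib

section
/- Let q > 0, C > 0, and let a be a real number with 0 < a < 1. Let V : (0,∞) → ℝ be a function with V(r) > 0 for all r > 0, and suppose that for every r > 0 one has V(r) ≥ (r/(2C))^q · V(r/2)^a. Then for every natural number k and every r > 0, V(r) ≥ (r/C)^{q·Σ_{i=0}^{k} aⁱ} · 2^{−q·Σ_{i=0}^{k} (i+1)aⁱ} · V(r/2^{k+1})^{a^{k+1}}. -/
/-!
Apply the one-step bound `g r * f (r / c) ^ a ≤ f r` at the innermost radius `r / c ^ (k + 1)`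
and raise it to the power `a ^ (k + 1)`: after `k + 1` steps the gains multiply to
`∏ i, g (r / c ^ i) ^ a ^ i`. For `g r = (r / (2C)) ^ q` and `c = 2` the `i`-th gain is
`(r / C) ^ (q aⁱ) * 2 ^ (-q (i + 1) aⁱ)`, so the product collapses to the two geometric-type
sums of the exponents.
-/

open Finset

theorem prod_rpow_mul_rpow_le_of_step {f g : ℝ → ℝ} {a c : ℝ} (ha : 0 ≤ a) (hc : 0 < c)
    (hf : ∀ r, 0 < r → 0 < f r) (hg : ∀ r, 0 < r → 0 ≤ g r)
    (hstep : ∀ r, 0 < r → g r * f (r / c) ^ a ≤ f r) (k : ℕ) {r : ℝ} (hr : 0 < r) :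
    (∏ i ∈ range (k + 1), g (r / c ^ i) ^ a ^ i) * f (r / c ^ (k + 1)) ^ a ^ (k + 1)
      ≤ f r := by
  induction k with
  | zero => simpa using hstep r hr
  | succ k ih =>
    have hrk : 0 < r / c ^ (k + 1) := by positivity
    have hfa : 0 ≤ f (r / c ^ (k + 2)) ^ a := Real.rpow_nonneg (hf _ (by positivity)).le _
    have hinner : (g (r / c ^ (k + 1)) * f (r / c ^ (k + 2)) ^ a) ^ a ^ (k + 1)
        ≤ f (r / c ^ (k + 1)) ^ a ^ (k + 1) := by
      have := hstep _ hrk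
      rw [div_div, ← pow_succ] at this
      exact Real.rpow_le_rpow (mul_nonneg (hg _ hrk) hfa) this (by positivity)
    rw [Real.mul_rpow (hg _ hrk) hfa, ← Real.rpow_mul (hf _ (by positivity)).le, ← pow_succ']
      at hinner
    calc (∏ i ∈ range (k + 2), g (r / c ^ i) ^ a ^ i) * f (r / c ^ (k + 2)) ^ a ^ (k + 2)
        = (∏ i ∈ range (k + 1), g (r / c ^ i) ^ a ^ i) *
            (g (r / c ^ (k + 1)) ^ a ^ (k + 1) * f (r / c ^ (k + 2)) ^ a ^ (k + 2)) := by
          rw [prod_range_succ, mul_assoc]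
      _ ≤ (∏ i ∈ range (k + 1), g (r / c ^ i) ^ a ^ i) * f (r / c ^ (k + 1)) ^ a ^ (k + 1) :=
          mul_le_mul_of_nonneg_left hinner
            (prod_nonneg fun i _ => Real.rpow_nonneg (hg _ (by positivity)) _)
      _ ≤ f r := ih

theorem rpow_rpow_div_two_pow_succ (x q e : ℝ) (hx : 0 < x) (i : ℕ) :
    ((x / 2 ^ (i + 1)) ^ q) ^ e = x ^ (q * e) * 2 ^ (-(q * ((i + 1) * e))) := by
  have h2 : (2 : ℝ) ^ (i + 1) = 2 ^ ((i : ℝ) + 1) := by norm_cast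
  rw [← Real.rpow_mul (by positivity), Real.div_rpow hx.le (by positivity), h2,
    ← Real.rpow_mul zero_le_two, Real.rpow_neg zero_le_two, div_eq_mul_inv, mul_left_comm]

theorem prod_rpow_div_two_pow_succ (x q a : ℝ) (hx : 0 < x) (k : ℕ) :
    ∏ i ∈ range (k + 1), ((x / 2 ^ (i + 1)) ^ q) ^ a ^ i =
      x ^ (q * ∑ i ∈ range (k + 1), a ^ i) *
        2 ^ (-(q * ∑ i ∈ range (k + 1), ((i : ℝ) + 1) * a ^ i)) := by
  simp only [rpow_rpow_div_two_pow_succ x q _ hx, prod_mul_distrib, mul_sum, ← sum_neg_distrib,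
    Real.rpow_sum_of_pos hx, Real.rpow_sum_of_pos two_pos]

theorem stmt_1_general (q C a : ℝ) (hC : 0 < C) (ha0 : 0 < a)
    (V : ℝ → ℝ) (hpos : ∀ r : ℝ, 0 < r → 0 < V r)
    (hstep : ∀ r : ℝ, 0 < r → V r ≥ (r / (2 * C)) ^ q * V (r / 2) ^ a) :
    ∀ (k : ℕ) (r : ℝ), 0 < r →
      V r ≥ (r / C) ^ (q * ∑ i ∈ Finset.range (k + 1), a ^ i) *
        2 ^ (-(q * ∑ i ∈ Finset.range (k + 1), ((i : ℝ) + 1) * a ^ i)) *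
        V (r / 2 ^ (k + 1)) ^ (a ^ (k + 1)) := by
  intro k r hr
  have hiter :=
    prod_rpow_mul_rpow_le_of_step ha0.le two_pos hpos (fun r _ => by positivity) hstep k hr
  have hscale (i : ℕ) : r / 2 ^ i / (2 * C) = r / C / 2 ^ (i + 1) := by
    rw [pow_succ]; field_simp
  simp only [hscale, prod_rpow_div_two_pow_succ (r / C) q a (by positivity)] at hiter
  exact hiter

/-- Iteration step in the proof of Theorem 1.2. -/
theorem stmt_1 (q C a : ℝ) (hq : 0 < q) (hC : 0 < C) (ha0 : 0 < a) (ha1 : a < 1)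
    (V : ℝ → ℝ) (hpos : ∀ r : ℝ, 0 < r → 0 < V r)
    (hstep : ∀ r : ℝ, 0 < r → V r ≥ (r / (2 * C)) ^ q * V (r / 2) ^ a) :
    ∀ (k : ℕ) (r : ℝ), 0 < r →
      V r ≥ (r / C) ^ (q * ∑ i ∈ Finset.range (k + 1), a ^ i) *
        2 ^ (-(q * ∑ i ∈ Finset.range (k + 1), ((i : ℝ) + 1) * a ^ i)) *
        V (r / 2 ^ (k + 1)) ^ (a ^ (k + 1)) :=
  stmt_1_general q C a hC ha0 V hpos hstep
end

section
/- Let n ≥ 2 be an integer, let q be a real number with 1 ≤ q < n, define p by 1/p = 1/q − 1/n, let θ ∈ [0,1), let s > 0, define t by 1/t = θ/s + (1−θ)/p, and let C > 0 and k > 1. Let V : (0,∞) → ℝ be a function with V(r) > 0 for all r > 0 such that for every r > 0: (i) V(r)^{1/t} ≤ C · ((k−1)r)^{−(1−θ)} · V(kr)^{θ/s + (1−θ)/q}, and (ii) V(kr) ≤ kⁿ · V(r). Then for every r > 0, V(r) ≥ (k−1)ⁿ · C^{−n/(1−θ)} · k^{−(n²θ/(s(1−θ)) + n²/q)} · rⁿ.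 -/
/-!
Write `a = θ/s + (1-θ)/q`, so that `1/t = a - (1-θ)/n`. Feeding (ii) into the right-hand side of (i)
gives `V(r)^(a - (1-θ)/n) ≤ C ((k-1)r)^(-(1-θ)) k^(na) V(r)^a`; cancelling `V(r)^a` leaves an upper
bound for `V(r)^(-(1-θ)/n)`, and raising it to the power `-n/(1-θ)` gives the lower bound.
-/

open Real

theorem rpow_neg_inv_le_of_rpow_neg_le {x e M : ℝ} (hx : 0 < x) (he : 0 < e)
    (h : x ^ (-e) ≤ M) : M ^ (-e⁻¹) ≤ x :=
  calc M ^ (-e⁻¹) ≤ (x ^ (-e)) ^ (-e⁻¹) :=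
        rpow_le_rpow_of_nonpos (by positivity) h (by simpa using he.le)
    _ = x := by rw [← rpow_mul hx.le, neg_mul_neg, mul_inv_cancel₀ he.ne', rpow_one]

theorem rpow_neg_inv_le_of_rpow_sub_le {x y a e K D : ℝ} (hx : 0 < x) (hy : 0 ≤ y) (ha : 0 ≤ a)
    (he : 0 < e) (hK : 0 ≤ K) (hD : 0 ≤ D) (h : x ^ (a - e) ≤ K * y ^ a) (hyx : y ≤ D * x) :
    (K * D ^ a) ^ (-e⁻¹) ≤ x := by
  refine rpow_neg_inv_le_of_rpow_neg_le hx he (le_of_mul_le_mul_right ?_ (rpow_pos_of_pos hx a))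
  calc x ^ (-e) * x ^ a = x ^ (a - e) := by rw [← rpow_add hx, neg_add_eq_sub]
    _ ≤ K * y ^ a := h
    _ ≤ K * (D * x) ^ a := by gcongr
    _ = K * D ^ a * x ^ a := by rw [mul_rpow hD hx.le, mul_assoc]

theorem mul_rpow_mul_rpow_rpow_neg_div_one_sub {n θ C k r a : ℝ} (hθ : θ < 1) (hC : 0 < C) (hk : 1 < k)
    (hr : 0 < r) :
    (C * ((k - 1) * r) ^ (-(1 - θ)) * (k ^ n) ^ a) ^ (-(n / (1 - θ))) =
      (k - 1) ^ n * C ^ (-(n / (1 - θ))) * k ^ (-(n ^ 2 * a / (1 - θ))) * r ^ n := by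
  have hk0 : 0 < k := by linarith
  have hkr : 0 < (k - 1) * r := mul_pos (by linarith) hr
  rw [mul_rpow (by positivity) (by positivity), mul_rpow hC.le (by positivity),
    ← rpow_mul hkr.le, ← rpow_mul hk0.le, ← rpow_mul hk0.le, neg_mul_neg,
    mul_div_cancel₀ _ (by linarith), mul_rpow (by linarith) hr.le]
  ring_nf

theorem stmt_3_general (n : ℕ) (hn : 2 ≤ n) (q p θ s t C k : ℝ)
    (hq1 : 1 ≤ q) (hp : 1 / p = 1 / q - 1 / (n : ℝ))
    (hθ0 : 0 ≤ θ) (hθ1 : θ < 1) (hs : 0 < s)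
    (ht : 1 / t = θ / s + (1 - θ) / p)
    (hC : 0 < C) (hk : 1 < k)
    (V : ℝ → ℝ) (hpos : ∀ r : ℝ, 0 < r → 0 < V r)
    (hineq : ∀ r : ℝ, 0 < r →
      V r ^ (1 / t) ≤ C * ((k - 1) * r) ^ (-(1 - θ)) * V (k * r) ^ (θ / s + (1 - θ) / q))
    (hdoubling : ∀ r : ℝ, 0 < r → V (k * r) ≤ k ^ (n : ℝ) * V r) :
    ∀ r : ℝ, 0 < r →
      V r ≥ (k - 1) ^ (n : ℝ) * C ^ (-((n : ℝ) / (1 - θ))) *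
        k ^ (-((n : ℝ) ^ 2 * θ / (s * (1 - θ)) + (n : ℝ) ^ 2 / q)) * r ^ (n : ℝ) := by
  intro r hr
  have hn0 : (0 : ℝ) < n := by positivity
  have hθ' : 0 < 1 - θ := by linarith
  have hq0 : 0 < q := by linarith
  have ht' : 1 / t = (θ / s + (1 - θ) / q) - (1 - θ) / n := by
    rw [ht, div_eq_mul_one_div (1 - θ) p, hp]
    ring
  have hbound := rpow_neg_inv_le_of_rpow_sub_le (hpos r hr) (hpos (k * r) (by positivity)).le
    (by positivity) (by positivity) (by positivity) (by positivity) (ht' ▸ hineq r hr)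
    (hdoubling r hr)
  rw [inv_div, mul_rpow_mul_rpow_rpow_neg_div_one_sub hθ1 hC hk hr] at hbound
  convert hbound using 4
  field_simp

/-- Abstract volume lower bound inside the proof of Theorem 1.3. -/
theorem stmt_3 (n : ℕ) (hn : 2 ≤ n) (q p θ s t C k : ℝ)
    (hq1 : 1 ≤ q) (hqn : q < n) (hp : 1 / p = 1 / q - 1 / (n : ℝ))
    (hθ0 : 0 ≤ θ) (hθ1 : θ < 1) (hs : 0 < s)
    (ht : 1 / t = θ / s + (1 - θ) / p)
    (hC : 0 < C) (hk : 1 < k)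
    (V : ℝ → ℝ) (hpos : ∀ r : ℝ, 0 < r → 0 < V r)
    (hineq : ∀ r : ℝ, 0 < r →
      V r ^ (1 / t) ≤ C * ((k - 1) * r) ^ (-(1 - θ)) * V (k * r) ^ (θ / s + (1 - θ) / q))
    (hdoubling : ∀ r : ℝ, 0 < r → V (k * r) ≤ k ^ (n : ℝ) * V r) :
    ∀ r : ℝ, 0 < r →
      V r ≥ (k - 1) ^ (n : ℝ) * C ^ (-((n : ℝ) / (1 - θ))) *
        k ^ (-((n : ℝ) ^ 2 * θ / (s * (1 - θ)) + (n : ℝ) ^ 2 / q)) * r ^ (n : ℝ) :=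
  stmt_3_general n hn q p θ s t C k hq1 hp hθ0 hθ1 hs ht hC hk V hpos hineq hdoubling
end

section
/- Let n ≥ 2 be an integer, C > 0, and k > 1. Let V : (0,∞) → ℝ be a function with V(r) > 0 for all r > 0 such that for every r > 0: (i) V(r)^{1+2/n} ≤ C · ((k−1)r)^{−2} · V(kr)^{1+4/n}, and (ii) V(kr) ≤ kⁿ · V(r). Then for every r > 0, V(r) ≥ (k−1)ⁿ · C^{−n/2} · k^{−n(n+4)/2} · rⁿ. -/
/-!
Feeding the doubling bound `V (k r) ≤ kⁿ V r` into the Nash-type inequality gives, with `a = V r`,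
`a ^ (1 + 2/n) ≤ D · a ^ (1 + 4/n)` where `D = C ((k-1) r)⁻² k^(n+4)`. Since the exponent on the
right is larger, this self-improves to `a ^ (2/n) ≥ D⁻¹`, i.e. `a ≥ D ^ (-n/2)`, and `D ^ (-n/2)`
is exactly the claimed multiple of `rⁿ`.
-/

open Real

lemma rpow_neg_inv_sub_le_of_rpow_le_mul_rpow {a D s t : ℝ} (ha : 0 < a) (hD : 0 < D)
    (hst : s < t) (h : a ^ s ≤ D * a ^ t) : D ^ (-(t - s)⁻¹) ≤ a := by
  have hts : 0 < t - s := sub_pos.mpr hst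
  have hone : 1 ≤ D * a ^ (t - s) := by
    rwa [rpow_sub ha, ← mul_div_assoc, one_le_div (rpow_pos_of_pos ha s)]
  have hinv : D⁻¹ ≤ a ^ (t - s) := by
    rwa [inv_le_iff_one_le_mul₀' hD]
  calc D ^ (-(t - s)⁻¹) = D⁻¹ ^ (t - s)⁻¹ := by rw [rpow_neg hD.le, inv_rpow hD.le]
    _ ≤ (a ^ (t - s)) ^ (t - s)⁻¹ := by gcongr
    _ = a := by rw [← rpow_mul ha.le, mul_inv_cancel₀ hts.ne', rpow_one]

lemma rpow_le_mul_rpow_of_le_rpow_mul {a b c m p : ℝ} (ha : 0 ≤ a) (hb : 0 ≤ b) (hc : 0 ≤ c)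
    (hp : 0 ≤ p) (h : b ≤ c ^ m * a) : b ^ p ≤ c ^ (m * p) * a ^ p :=
  calc b ^ p ≤ (c ^ m * a) ^ p := by gcongr
    _ = c ^ (m * p) * a ^ p := by rw [mul_rpow (by positivity) ha, rpow_mul hc]

lemma nash_constant_rpow_neg_half {n C k r : ℝ} (hC : 0 < C) (hk : 1 < k) (hr : 0 < r) :
    (C * ((k - 1) * r) ^ (-(2 : ℝ)) * k ^ (n + 4)) ^ (-(n / 2)) =
      (k - 1) ^ n * C ^ (-n / 2) * k ^ (-(n * (n + 4) / 2)) * r ^ n := by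
  have hk1 : 0 < k - 1 := by linarith
  rw [mul_rpow (by positivity) (by positivity), mul_rpow hC.le (by positivity),
    ← rpow_mul (by positivity), ← rpow_mul (by positivity), mul_rpow hk1.le hr.le,
    show -(2 : ℝ) * -(n / 2) = n by ring, show (n + 4) * -(n / 2) = -(n * (n + 4) / 2) by ring,
    neg_div]
  ring

/-- Abstract volume estimate underlying Corollary 2.1 (Nash inequality case). -/
theorem stmt_5 (n : ℕ) (hn : 2 ≤ n) (C k : ℝ) (hC : 0 < C) (hk : 1 < k)
    (V : ℝ → ℝ) (hpos : ∀ r : ℝ, 0 < r → 0 < V r)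
    (hineq : ∀ r : ℝ, 0 < r →
      V r ^ (1 + 2 / (n : ℝ)) ≤ C * ((k - 1) * r) ^ (-(2 : ℝ)) * V (k * r) ^ (1 + 4 / (n : ℝ)))
    (hdoubling : ∀ r : ℝ, 0 < r → V (k * r) ≤ k ^ (n : ℝ) * V r) :
    ∀ r : ℝ, 0 < r →
      V r ≥ (k - 1) ^ (n : ℝ) * C ^ (-(n : ℝ) / 2) *
        k ^ (-((n : ℝ) * ((n : ℝ) + 4) / 2)) * r ^ (n : ℝ) := by
  intro r hr
  have hn0 : (0 : ℝ) < n := by exact_mod_cast (by omega : 0 < n)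
  have hk0 : 0 < k := by linarith
  have hk1 : 0 < k - 1 := by linarith
  have hgrowth :
      V (k * r) ^ (1 + 4 / (n : ℝ)) ≤ k ^ ((n : ℝ) + 4) * V r ^ (1 + 4 / (n : ℝ)) := by
    have hmp : (n : ℝ) * (1 + 4 / n) = n + 4 := by field_simp
    simpa only [hmp] using rpow_le_mul_rpow_of_le_rpow_mul (p := 1 + 4 / (n : ℝ)) (hpos r hr).le
      (hpos (k * r) (by positivity)).le hk0.le (by positivity) (hdoubling r hr)
  have hself : V r ^ (1 + 2 / (n : ℝ)) ≤
      C * ((k - 1) * r) ^ (-(2 : ℝ)) * k ^ ((n : ℝ) + 4) * V r ^ (1 + 4 / (n : ℝ)) :=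
    calc _ ≤ _ := hineq r hr
      _ ≤ _ := mul_le_mul_of_nonneg_left hgrowth (by positivity)
      _ = _ := by ring
  have hlower := rpow_neg_inv_sub_le_of_rpow_le_mul_rpow (hpos r hr) (by positivity)
    (by gcongr; norm_num) hself
  have hexp : (1 + 4 / (n : ℝ) - (1 + 2 / n))⁻¹ = n / 2 := by
    field_simp; ring
  rwa [hexp, nash_constant_rpow_neg_half hC hk hr] at hlower
end

section
/- Let n ≥ 2, let μ be the Lebesgue (volume) measure on the n-dimensional Euclidean space E = ℝⁿ, and let t, s, q ≥ 1, θ ∈ [0,1), C > 0. Suppose that for every Lipschitz function f : E → ℝ with compact support, (∫|f|^t dμ)^{1/t} ≤ C · (∫|f|^s dμ)^{θ/s} · (∫‖Df(x)‖^q dμ(x))^{(1−θ)/q}, where Df denotes the Fréchet derivative of f (interpreted as 0 where f is not differentiable). Then for every x₀ ∈ E and every 0 < r < R, μ(B(x₀,r))^{1/t} ≤ C · (R−r)^{−(1−θ)} · μ(closedBall(x₀,R))^{θ/s + (1−θ)/q}. -/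
/-!
Test the Sobolev inequality on the cutoff `x ↦ max 0 (min 1 ((R - |x - x₀|) / (R - r)))`: it equals
`1` on `B(x₀, r)`, vanishes off `closedBall x₀ R`, takes values in `[0, 1]` and is
`(R - r)⁻¹`-Lipschitz, so its derivative has norm at most `(R - r)⁻¹`. Hence the left-hand side is at
least `|B(x₀, r)| ^ (1 / t)`, while the two integrals on the right are at most `|B(x₀, R)|` and
`(R - r) ^ (-q) |B(x₀, R)|`.
-/

open Metric MeasureTheory

section Integral

variable {X : Type*} [MeasurableSpace X] {μ : Measure X} {f : X → ℝ} {s : Set X}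

lemma integral_le_mul_measureReal_of_eq_zero_off {c : ℝ} (hs : μ s < ⊤)
    (hzero : ∀ x ∉ s, f x = 0) (hle : ∀ x ∈ s, ‖f x‖ ≤ c) : ∫ x, f x ∂μ ≤ c * μ.real s := by
  rw [← setIntegral_eq_integral_of_forall_compl_eq_zero hzero]
  exact (le_abs_self _).trans (norm_setIntegral_le_of_norm_le_const hs hle)

lemma measureReal_le_integral_of_one_le_on (hs : MeasurableSet s) (hμs : μ s ≠ ⊤)
    (hf : Integrable f μ) (hf0 : 0 ≤ f) (hf1 : ∀ x ∈ s, 1 ≤ f x) : μ.real s ≤ ∫ x, f x ∂μ :=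
  calc μ.real s = 1 * μ.real s := (one_mul _).symm
    _ ≤ ∫ x in s, f x ∂μ := setIntegral_ge_of_const_le_real hs hμs hf1 hf.integrableOn
    _ ≤ ∫ x, f x ∂μ := setIntegral_le_integral hf (Filter.Eventually.of_forall hf0)

end Integral

noncomputable def ballCutoff {X : Type*} [PseudoMetricSpace X] (x₀ : X) (r R : ℝ) (x : X) : ℝ :=
  max 0 (min 1 ((R - dist x x₀) / (R - r)))

section Cutoff

variable {X : Type*} [PseudoMetricSpace X] {x₀ : X} {r R : ℝ}

lemma ballCutoff_nonneg (x : X) : 0 ≤ ballCutoff x₀ r R x := le_max_left _ _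

lemma ballCutoff_le_one (x : X) : ballCutoff x₀ r R x ≤ 1 :=
  max_le zero_le_one (min_le_left _ _)

lemma ballCutoff_eq_one (hrR : r < R) {x : X} (hx : x ∈ closedBall x₀ r) :
    ballCutoff x₀ r R x = 1 := by
  have : 1 ≤ (R - dist x x₀) / (R - r) := by
    rw [one_le_div (sub_pos.2 hrR)]
    linarith [mem_closedBall.1 hx]
  simp [ballCutoff, this]

lemma ballCutoff_eq_zero (hrR : r ≤ R) {x : X} (hx : R ≤ dist x x₀) :
    ballCutoff x₀ r R x = 0 := by
  have : (R - dist x x₀) / (R - r) ≤ 0 :=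
    div_nonpos_of_nonpos_of_nonneg (by linarith) (by linarith)
  simp [ballCutoff, min_le_of_right_le this]

lemma ballCutoff_eq_zero_of_notMem_closedBall (hrR : r ≤ R) {x : X} (hx : x ∉ closedBall x₀ R) :
    ballCutoff x₀ r R x = 0 :=
  ballCutoff_eq_zero hrR (not_le.1 (mt mem_closedBall.2 hx)).le

lemma lipschitzWith_ballCutoff (hrR : r ≤ R) :
    LipschitzWith (Real.toNNReal (R - r)⁻¹) (ballCutoff x₀ r R) := by
  have hscale : LipschitzWith (Real.toNNReal (R - r)⁻¹) fun u : ℝ => (R - u) / (R - r) := by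
    refine LipschitzWith.of_dist_le_mul fun u v => ?_
    rw [Real.coe_toNNReal _ (inv_nonneg.2 (sub_nonneg.2 hrR)), Real.dist_eq, Real.dist_eq,
      ← sub_div, sub_sub_sub_cancel_left, abs_div, abs_of_nonneg (sub_nonneg.2 hrR), abs_sub_comm,
      div_eq_inv_mul]
  have h := ((LipschitzWith.id.const_min 1).const_max 0).comp
    (hscale.comp (LipschitzWith.dist_left x₀))
  rwa [one_mul, mul_one] at h

lemma hasCompactSupport_ballCutoff [ProperSpace X] (hrR : r ≤ R) :
    HasCompactSupport (ballCutoff x₀ r R) :=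
  HasCompactSupport.intro (isCompact_closedBall x₀ R) fun _ =>
    ballCutoff_eq_zero_of_notMem_closedBall hrR

end Cutoff

section Derivative

variable {E : Type*} [NormedAddCommGroup E] [NormedSpace ℝ E] {x₀ : E} {r R : ℝ}

lemma fderiv_ballCutoff_of_notMem_closedBall (hrR : r ≤ R) {x : E} (hx : x ∉ closedBall x₀ R) :
    fderiv ℝ (ballCutoff x₀ r R) x = 0 := by
  have hzero : ballCutoff x₀ r R =ᶠ[nhds x] fun _ => 0 := by
    filter_upwards [isClosed_closedBall.isOpen_compl.mem_nhds hx] with y hy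
    exact ballCutoff_eq_zero_of_notMem_closedBall hrR hy
  rw [hzero.fderiv_eq, fderiv_const_apply]

lemma norm_fderiv_ballCutoff_le (hrR : r ≤ R) (x : E) :
    ‖fderiv ℝ (ballCutoff x₀ r R) x‖ ≤ (R - r)⁻¹ := by
  simpa [Real.coe_toNNReal _ (inv_nonneg.2 (sub_nonneg.2 hrR))] using
    norm_fderiv_le_of_lipschitz ℝ (lipschitzWith_ballCutoff (x₀ := x₀) hrR) (x₀ := x)

end Derivative

section CutoffIntegral

variable {X : Type*} [PseudoMetricSpace X] [ProperSpace X] [MeasurableSpace X]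
  {μ : Measure X} [IsFiniteMeasureOnCompacts μ] {x₀ : X} {r R p : ℝ}

lemma integral_abs_ballCutoff_rpow_le (hrR : r ≤ R) (hp : 0 < p) :
    ∫ x, |ballCutoff x₀ r R x| ^ p ∂μ ≤ μ.real (closedBall x₀ R) := by
  have hf := ballCutoff_nonneg (x₀ := x₀) (r := r) (R := R)
  calc ∫ x, |ballCutoff x₀ r R x| ^ p ∂μ ≤ 1 * μ.real (closedBall x₀ R) :=
        integral_le_mul_measureReal_of_eq_zero_off measure_closedBall_lt_top ?_ ?_
    _ = μ.real (closedBall x₀ R) := one_mul _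
  · intro x hx
    rw [ballCutoff_eq_zero_of_notMem_closedBall hrR hx, abs_zero, Real.zero_rpow hp.ne']
  · intro x _
    rw [abs_of_nonneg (hf x), Real.norm_eq_abs, abs_of_nonneg (Real.rpow_nonneg (hf x) p)]
    exact Real.rpow_le_one (hf x) (ballCutoff_le_one x) hp.le

lemma measureReal_closedBall_le_integral_abs_ballCutoff_rpow [OpensMeasurableSpace X]
    (hrR : r < R) (hp : 0 < p) :
    μ.real (closedBall x₀ r) ≤ ∫ x, |ballCutoff x₀ r R x| ^ p ∂μ := by
  refine measureReal_le_integral_of_one_le_on measurableSet_closedBall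
    measure_closedBall_lt_top.ne ?_ (fun x => by positivity)
    (fun x hx => by rw [ballCutoff_eq_one hrR hx, abs_one, Real.one_rpow])
  refine Continuous.integrable_of_hasCompactSupport ?_ ?_
  · exact (lipschitzWith_ballCutoff hrR.le).continuous.abs.rpow_const fun _ => Or.inr hp.le
  · exact (hasCompactSupport_ballCutoff hrR.le).comp_left (g := fun y => |y| ^ p)
      (by rw [abs_zero, Real.zero_rpow hp.ne'])

end CutoffIntegral

lemma integral_norm_fderiv_ballCutoff_rpow_le {E : Type*} [NormedAddCommGroup E]
    [NormedSpace ℝ E] [ProperSpace E] [MeasurableSpace E] {μ : Measure E}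
    [IsFiniteMeasureOnCompacts μ] {x₀ : E} {r R p : ℝ} (hrR : r ≤ R) (hp : 0 < p) :
    ∫ x, ‖fderiv ℝ (ballCutoff x₀ r R) x‖ ^ p ∂μ ≤ (R - r)⁻¹ ^ p * μ.real (closedBall x₀ R) :=
  integral_le_mul_measureReal_of_eq_zero_off measure_closedBall_lt_top
    (fun x hx => by
      rw [fderiv_ballCutoff_of_notMem_closedBall hrR hx, norm_zero, Real.zero_rpow hp.ne'])
    (fun x _ => by
      rw [Real.norm_eq_abs, abs_of_nonneg (by positivity)]
      exact Real.rpow_le_rpow (norm_nonneg _) (norm_fderiv_ballCutoff_le hrR x) hp.le)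

theorem stmt_8_general (n : ℕ) (t s q θ C : ℝ)
    (ht : 1 ≤ t) (hs : 1 ≤ s) (hq : 1 ≤ q) (hθ0 : 0 ≤ θ) (hθ1 : θ < 1) (hC : 0 < C)
    (hSob : ∀ f : EuclideanSpace ℝ (Fin n) → ℝ, (∃ K : NNReal, LipschitzWith K f) →
      HasCompactSupport f →
      (∫ x, |f x| ^ t ∂(volume : Measure (EuclideanSpace ℝ (Fin n)))) ^ (1 / t) ≤
        C * (∫ x, |f x| ^ s ∂(volume : Measure (EuclideanSpace ℝ (Fin n)))) ^ (θ / s) *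
          (∫ x, ‖fderiv ℝ f x‖ ^ q ∂(volume : Measure (EuclideanSpace ℝ (Fin n)))) ^
            ((1 - θ) / q)) :
    ∀ (x₀ : EuclideanSpace ℝ (Fin n)) (r R : ℝ), 0 < r → r < R →
      (volume (ball x₀ r)).toReal ^ (1 / t) ≤
        C * (R - r) ^ (-(1 - θ)) *
          (volume (closedBall x₀ R)).toReal ^ (θ / s + (1 - θ) / q) := by
  intro x₀ r R _ hrR
  set f := ballCutoff x₀ r R
  set M := volume.real (closedBall x₀ R)
  have hD : 0 < R - r := sub_pos.2 hrR
  calc volume.real (ball x₀ r) ^ (1 / t)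
      ≤ (∫ x, |f x| ^ t) ^ (1 / t) := by
        gcongr
        exact (measureReal_mono ball_subset_closedBall measure_closedBall_lt_top.ne).trans
          (measureReal_closedBall_le_integral_abs_ballCutoff_rpow hrR (by linarith))
    _ ≤ C * (∫ x, |f x| ^ s) ^ (θ / s) * (∫ x, ‖fderiv ℝ f x‖ ^ q) ^ ((1 - θ) / q) :=
        hSob f ⟨_, lipschitzWith_ballCutoff hrR.le⟩ (hasCompactSupport_ballCutoff hrR.le)
    _ ≤ C * M ^ (θ / s) * ((R - r)⁻¹ ^ q * M) ^ ((1 - θ) / q) := by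
        gcongr
        · exact integral_abs_ballCutoff_rpow_le hrR.le (by linarith)
        · exact integral_norm_fderiv_ballCutoff_rpow_le hrR.le (by linarith)
    _ = C * (R - r) ^ (-(1 - θ)) * M ^ (θ / s + (1 - θ) / q) := by
        rw [Real.mul_rpow (by positivity) measureReal_nonneg, ← Real.rpow_mul (by positivity),
          mul_div_cancel₀ _ (by linarith), Real.inv_rpow hD.le, ← Real.rpow_neg hD.le,
          Real.rpow_add' measureReal_nonneg (by positivity)]
        ring

/-- Ball-inequality derivation step in the proof of Theorem 1.3, on Euclidean space. -/
theorem stmt_8 (n : ℕ) (hn : 2 ≤ n) (t s q θ C : ℝ)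
    (ht : 1 ≤ t) (hs : 1 ≤ s) (hq : 1 ≤ q) (hθ0 : 0 ≤ θ) (hθ1 : θ < 1) (hC : 0 < C)
    (hSob : ∀ f : EuclideanSpace ℝ (Fin n) → ℝ, (∃ K : NNReal, LipschitzWith K f) →
      HasCompactSupport f →
      (∫ x, |f x| ^ t ∂(volume : Measure (EuclideanSpace ℝ (Fin n)))) ^ (1 / t) ≤
        C * (∫ x, |f x| ^ s ∂(volume : Measure (EuclideanSpace ℝ (Fin n)))) ^ (θ / s) *
          (∫ x, ‖fderiv ℝ f x‖ ^ q ∂(volume : Measure (EuclideanSpace ℝ (Fin n)))) ^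
            ((1 - θ) / q)) :
    ∀ (x₀ : EuclideanSpace ℝ (Fin n)) (r R : ℝ), 0 < r → r < R →
      (volume (ball x₀ r)).toReal ^ (1 / t) ≤
        C * (R - r) ^ (-(1 - θ)) *
          (volume (closedBall x₀ R)).toReal ^ (θ / s + (1 - θ) / q) :=
  stmt_8_general n t s q θ C ht hs hq hθ0 hθ1 hC hSob
end
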